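/- Let X be a compact subset of ℂ not containing 0. If the set of polynomials in x is dense in C(X) (continuous complex-valued functions with the sup norm), then the set of polynomials in 1/x is also dense in C(X). -/

import Mathlib

/-!
Let `S` be the closed subalgebra of `C(X)` generated by `u = 1/z`. It suffices to show that
`z ∈ S`, since then `S` contains the dense algebra of polynomials in `z`.

Invertibility in a closed subalgebra of a Banach algebra propagates along connected families of
elements that are invertible in the ambient algebra. Applied to `1 - μu`, which is invertible in
`C(X)` for `μ ∉ X`, this makes `1 - μu` invertible in `S` for every `μ` in the component `W` of
`0` in `ℂ \ X`. Density of the polynomials forces `W` to be unbounded: otherwise the maximum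
modulus principle, applied to `z p(z) - 1` with `p ≈ 1/z` on `X ⊇ ∂W`, would give `1 < 1`. Taking
`μ ∈ W` with `|μ| > ‖z‖_X`, the element `u - μ⁻¹` is invertible in `S`, and propagating once more
along the disc `|t| ≤ |μ⁻¹|`, on which `u - t` is invertible in `C(X)`, so is `u`, whose inverse
is `z`.
-/

open Polynomial Set Bornology

namespace Subalgebra

variable {𝕜 A : Type*} [NormedField 𝕜] [NormedRing A] [CompleteSpace A] [NormedAlgebra 𝕜 A]
  (S : Subalgebra 𝕜 A) [IsClosed (S : Set A)]

theorem isUnit_of_isUnit_val_of_mem_closure {a : S} (ha : IsUnit (a : A))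
    (hcl : a ∈ closure {x : S | IsUnit x}) : IsUnit a :=
  isUnit_of_isUnit_val_of_eventually S ha nhdsWithin_le_nhds self_mem_nhdsWithin
    (mem_closure_iff_nhdsWithin_neBot.mp hcl)

theorem isUnit_of_isPreconnected {P : Set S} (hP : IsPreconnected P)
    (hPA : ∀ a ∈ P, IsUnit (a : A)) {a₀ : S} (ha₀ : a₀ ∈ P) (hunit : IsUnit a₀) {a : S}
    (ha : a ∈ P) : IsUnit a := by
  have : CompleteSpace S := ‹IsClosed (S : Set A)›.completeSpace_coe
  have hsub : P ⊆ {x : S | IsUnit x} ∪ (closure {x : S | IsUnit x})ᶜ := fun b hb =>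
    (em (b ∈ closure {x : S | IsUnit x})).imp
      (isUnit_of_isUnit_val_of_mem_closure S (hPA b hb)) id
  exact hP.subset_left_of_subset_union Units.isOpen isClosed_closure.isOpen_compl
    (disjoint_compl_right.mono_left subset_closure) hsub ⟨a₀, ha₀, hunit⟩ ha

end Subalgebra

theorem IsOpen.frontier_connectedComponentIn_subset {α : Type*} [TopologicalSpace α]
    [LocallyConnectedSpace α] {U : Set α} (hU : IsOpen U) (x : α) :
    frontier (connectedComponentIn U x) ⊆ Uᶜ := by
  intro y hy hyU
  rw [hU.connectedComponentIn.frontier_eq] at hy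
  obtain ⟨z, hzy, hzx⟩ := mem_closure_iff.mp hy.1 _ hU.connectedComponentIn
    (mem_connectedComponentIn hyU)
  exact hy.2 <| (connectedComponentIn_eq hzx).trans (connectedComponentIn_eq hzy).symm ▸
    mem_connectedComponentIn hyU

theorem not_isBounded_connectedComponentIn_compl {K : Set ℂ} (hK : IsClosed K) (p : ℂ[X])
    {c : ℝ} (hc : c < 1) (hp : ∀ z ∈ K, ‖z * p.eval z - 1‖ ≤ c) :
    ¬IsBounded (connectedComponentIn Kᶜ 0) := by
  intro hW
  have h0 : (0 : ℂ) ∉ K := fun h => by simpa using (hp 0 h).trans_lt hc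
  have hdiff : DiffContOnCl ℂ (fun z => z * p.eval z - 1) (connectedComponentIn Kᶜ 0) :=
    (differentiable_id.mul p.differentiable |>.sub_const 1).diffContOnCl
  have := Complex.norm_le_of_forall_mem_frontier_norm_le hW hdiff
    (fun z hz => hp z (not_not.mp (hK.isOpen_compl.frontier_connectedComponentIn_subset 0 hz)))
    (subset_closure (mem_connectedComponentIn h0))
  norm_num at this
  linarith

noncomputable def coordInv (K : Set ℂ) (h0 : (0 : ℂ) ∉ K) : C(K, ℂ) :=
  ⟨fun z => (z : ℂ)⁻¹, continuous_subtype_val.inv₀ fun z => ne_of_mem_of_not_mem z.2 h0⟩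

@[simp]
theorem coordInv_apply {K : Set ℂ} (h0 : (0 : ℂ) ∉ K) (z : K) : coordInv K h0 z = (z : ℂ)⁻¹ :=
  rfl

section CoordInv

variable {K : Set ℂ} [CompactSpace K] (h0 : (0 : ℂ) ∉ K)
include h0

theorem exists_polynomial_norm_mul_eval_sub_one_le
    (hdense : Dense (polynomialFunctions K : Set C(K, ℂ))) :
    ∃ p : ℂ[X], ∀ z ∈ K, ‖z * p.eval z - 1‖ ≤ 1 / 2 := by
  set M := ‖toContinuousMapOnAlgHom K X‖ + 1
  have hM : 0 < M := by positivity
  obtain ⟨_, ⟨p, -, rfl⟩, hp⟩ := Metric.mem_closure_iff.mp (hdense (coordInv K h0)) (1 / (2 * M))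
    (by positivity)
  refine ⟨p, fun z hz => ?_⟩
  have hz0 : z ≠ 0 := ne_of_mem_of_not_mem hz h0
  have hzM : ‖z‖ ≤ M := by
    simpa [M] using (ContinuousMap.norm_coe_le_norm (toContinuousMapOnAlgHom K X) ⟨z, hz⟩).trans
      (le_add_of_nonneg_right zero_le_one)
  have hdist : ‖z⁻¹ - p.eval z‖ ≤ 1 / (2 * M) := by
    simpa [dist_eq_norm] using ((ContinuousMap.dist_apply_le_dist ⟨z, hz⟩).trans_lt hp).le
  calc ‖z * p.eval z - 1‖ = ‖z‖ * ‖z⁻¹ - p.eval z‖ := by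
        rw [← norm_mul, ← norm_neg, mul_sub, mul_inv_cancel₀ hz0, neg_sub]
    _ ≤ M * (1 / (2 * M)) := by gcongr
    _ = 1 / 2 := by field_simp

variable (S : Subalgebra ℂ C(K, ℂ)) [IsClosed (S : Set C(K, ℂ))] {x : S}
  (hx : (x : C(K, ℂ)) = coordInv K h0)
include hx

theorem isUnit_one_sub_smul_of_mem_connectedComponentIn {μ : ℂ}
    (hμ : μ ∈ connectedComponentIn Kᶜ 0) : IsUnit (1 - μ • x) := by
  refine S.isUnit_of_isPreconnected (isPreconnected_connectedComponentIn.image _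
    (by fun_prop : Continuous fun ν : ℂ => 1 - ν • x).continuousOn) ?_
    (mem_image_of_mem _ (mem_connectedComponentIn h0)) (by simp) (mem_image_of_mem _ hμ)
  rintro _ ⟨ν, hν, rfl⟩
  refine (ContinuousMap.isUnit_iff_forall_ne_zero _).mpr fun z => ?_
  have hzν : (z : ℂ) ≠ ν := fun h => connectedComponentIn_subset _ _ hν (h ▸ z.2)
  simpa [hx, sub_ne_zero, ← div_eq_mul_inv, eq_comm (a := (1 : ℂ)), div_eq_one_iff_eq (ne_of_mem_of_not_mem z.2 h0)]
    using hzν.symm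

theorem isUnit_of_isUnit_one_sub_smul {μ : ℂ} (hμ : ‖toContinuousMapOnAlgHom K X‖ < ‖μ‖)
    (hunit : IsUnit (1 - μ • x)) : IsUnit x := by
  have hμ0 : μ ≠ 0 := norm_pos_iff.mp ((norm_nonneg _).trans_lt hμ)
  have hμinv : x - algebraMap ℂ S μ⁻¹ = (-μ⁻¹) • (1 - μ • x) := by
    rw [Algebra.algebraMap_eq_smul_one, smul_sub, smul_smul, neg_mul, inv_mul_cancel₀ hμ0]
    module
  suffices IsUnit (x - algebraMap ℂ S 0) by simpa using this
  refine S.isUnit_of_isPreconnected ((convex_closedBall (0 : ℂ) ‖μ‖⁻¹).isPreconnected.image _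
    (by fun_prop : Continuous fun t : ℂ => x - algebraMap ℂ S t).continuousOn) ?_
    (mem_image_of_mem _ (x := μ⁻¹) (by simp)) ?_ (mem_image_of_mem _ (x := 0) (by simp))
  · rintro _ ⟨t, ht, rfl⟩
    refine (ContinuousMap.isUnit_iff_forall_ne_zero _).mpr fun z hzt => ?_
    have hz : ‖(z : ℂ)‖ ≤ ‖toContinuousMapOnAlgHom K X‖ := by
      simpa using ContinuousMap.norm_coe_le_norm (toContinuousMapOnAlgHom K X) z
    have ht' : ‖t‖ ≤ ‖μ‖⁻¹ := by simpa using ht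
    simp [hx, sub_eq_zero] at hzt
    rw [← hzt, norm_inv, inv_le_inv₀ (norm_pos_iff.mpr (ne_of_mem_of_not_mem z.2 h0)) (norm_pos_iff.mpr hμ0)] at ht'
    linarith
  · rw [hμinv]
    exact (IsUnit.smul (Units.mk0 _ (neg_ne_zero.mpr (inv_ne_zero hμ0))) hunit :)

omit hx in
theorem toContinuousMapOnAlgHom_X_mem_of_coordInv_mem
    (hK : ¬IsBounded (connectedComponentIn Kᶜ 0)) (hu : coordInv K h0 ∈ S) :
    toContinuousMapOnAlgHom K X ∈ S := by
  obtain ⟨μ, hμ, hμK⟩ :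
      ∃ μ ∈ connectedComponentIn Kᶜ 0, ‖toContinuousMapOnAlgHom K X‖ < ‖μ‖ := by
    by_contra! h
    exact hK (isBounded_iff_forall_norm_le.mpr ⟨_, h⟩)
  obtain ⟨b, hb⟩ := (isUnit_of_isUnit_one_sub_smul h0 S (x := ⟨_, hu⟩) rfl hμK
    (isUnit_one_sub_smul_of_mem_connectedComponentIn h0 S rfl hμ)).exists_right_inv
  have hXu : toContinuousMapOnAlgHom K X * coordInv K h0 = 1 := by
    ext z
    simp [mul_inv_cancel₀ (ne_of_mem_of_not_mem z.2 h0)]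
  convert b.2
  exact left_inv_eq_right_inv hXu congr(($hb : C(K, ℂ)))

end CoordInv

/-- If `X ⊆ ℂ` is compact with `0 ∉ X` and the polynomials in `x` are dense
in `C(X, ℂ)`, then the polynomials in `1/x` are dense in `C(X, ℂ)`. -/
theorem stmt0 (X : Set ℂ) (hX : IsCompact X) (h0 : (0 : ℂ) ∉ X)
    (hdense : Dense {f : C(X, ℂ) | ∃ p : Polynomial ℂ, ∀ z : X, f z = p.eval (z : ℂ)}) :
    Dense {f : C(X, ℂ) | ∃ p : Polynomial ℂ, ∀ z : X, f z = p.eval ((z : ℂ)⁻¹)} := by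
  have : CompactSpace X := isCompact_iff_compactSpace.mp hX
  have hpoly : {f : C(X, ℂ) | ∃ p : Polynomial ℂ, ∀ z : X, f z = p.eval (z : ℂ)} =
      (polynomialFunctions X : Set C(X, ℂ)) := by
    ext f
    simp [ContinuousMap.ext_iff, eq_comm]
  have hinv : {f : C(X, ℂ) | ∃ p : Polynomial ℂ, ∀ z : X, f z = p.eval ((z : ℂ)⁻¹)} =
      (Algebra.adjoin ℂ {coordInv X h0} : Set C(X, ℂ)) := by
    ext f
    simp [Algebra.adjoin_singleton_eq_range_aeval, ContinuousMap.ext_iff, eq_comm,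
      aeval_continuousMap_apply]
  rw [hpoly] at hdense
  rw [hinv, ← dense_closure, ← Subalgebra.topologicalClosure_coe]
  obtain ⟨p, hp⟩ := exists_polynomial_norm_mul_eval_sub_one_le h0 hdense
  have := (Algebra.adjoin ℂ {coordInv X h0}).isClosed_topologicalClosure
  have hz := toContinuousMapOnAlgHom_X_mem_of_coordInv_mem h0 _
    (not_isBounded_connectedComponentIn_compl hX.isClosed p (by norm_num) hp)
    (Subalgebra.le_topologicalClosure _ (Algebra.self_mem_adjoin_singleton ℂ _))
  refine hdense.mono ?_
  rw [polynomialFunctions.eq_adjoin_X]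
  exact Algebra.adjoin_le (singleton_subset_iff.mpr hz)
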